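/- arXiv:1002.4119 — 5 statements merged into one kernel-verified Lean document; each statement's English description precedes it below -/
import Mathlib

section
/- Let M be an invertible n×n matrix and F^j, V^{pj}, G^p be n×n matrices. Define the block matrices A^p with blocks [[F^j δ^p_i, M^{-1} δ^p_i],[V^{pj}, G^p]] and 𝔄^p with blocks [[0, δ^p_i],[𝒜^{pj}, ℬ^p]], where 𝒜^{ij} = M^{-1}(V^{ij} − G^i M F^j) and ℬ^i = F^i + M^{-1} G^i M. Then for each p, 𝔄^p = 𝒯^{-1} A^p 𝒯 where 𝒯 is the block matrix [[1, 0],[−M F, M]] (with blocks indexed appropriately), i.e. 𝔄^p and A^p are similar via a fixed invertible matrix independent of p. -/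
/-!
Write `L = [F^j]_j` for the block row of the `F^j` and `C = [δ^p_i]_i` for the block column
selecting the index `p`. Then `A^p = [[C L, C M⁻¹], [V^p, G^p]]` and
`𝔄^p = [[0, C], [M⁻¹ (V^p - G^p M L), L C + M⁻¹ G^p M]]` (note `L C = F^p`), and the identity
`𝒯 𝔄^p = A^p 𝒯` is a four-block computation in which only `M M⁻¹ = M⁻¹ M = 1` is used.
The matrix `𝒯⁻¹` is the inverse of the lower block triangular `𝒯` by the same computation.
-/

open Matrix

section BlockRowCol

variable {ι l m n k α : Type*}

def blockRow (f : ι → Matrix m n α) : Matrix m (ι × n) α :=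
  of fun a jb => f jb.1 a jb.2

/-- The block column `(δ^p_i X)_i`. -/
def blockColSingle [DecidableEq ι] [Zero α] (p : ι) (X : Matrix m n α) : Matrix (ι × m) n α :=
  of fun ia b => if ia.1 = p then X ia.2 b else 0

theorem blockRow_sub [Sub α] (f g : ι → Matrix m n α) :
    blockRow f - blockRow g = blockRow (f - g) :=
  rfl

theorem mul_blockRow [Fintype m] [NonUnitalNonAssocSemiring α]
    (X : Matrix l m α) (f : ι → Matrix m n α) :
    X * blockRow f = blockRow fun j => X * f j :=
  rfl

theorem blockRow_mul_blockColSingle [Fintype ι] [DecidableEq ι] [Fintype n]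
    [NonUnitalNonAssocSemiring α] (f : ι → Matrix m n α) (p : ι) (X : Matrix n k α) :
    blockRow f * blockColSingle p X = f p * X := by
  ext a b
  simp [blockRow, blockColSingle, mul_apply, Fintype.sum_prod_type]

end BlockRowCol

theorem fromBlocks_one_zero_mul_fromBlocks_one_zero {m n α : Type*} [Fintype m] [Fintype n]
    [DecidableEq m] [NonAssocSemiring α] (L L' : Matrix n m α) (X Y : Matrix n n α) :
    fromBlocks (1 : Matrix m m α) 0 L X * fromBlocks 1 0 L' Y = fromBlocks 1 0 (L + X * L') (X * Y) := by
  simp [fromBlocks_multiply]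

section BlockSimilarity

variable {m n α : Type*} [Fintype m] [Fintype n] [DecidableEq m] [DecidableEq n] [CommRing α]

theorem fromBlocks_inv_mul_fromBlocks {M : Matrix n n α} (hM : IsUnit M) (L : Matrix n m α) :
    fromBlocks (1 : Matrix m m α) 0 L M⁻¹ * fromBlocks 1 0 (-(M * L)) M = 1 := by
  rw [fromBlocks_one_zero_mul_fromBlocks_one_zero, Matrix.mul_neg, ← Matrix.mul_assoc,
    nonsing_inv_mul M ((isUnit_iff_isUnit_det M).mp hM), Matrix.one_mul, add_neg_cancel,
    fromBlocks_one]

theorem fromBlocks_mul_fromBlocks_inv {M : Matrix n n α} (hM : IsUnit M) (L : Matrix n m α) :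
    fromBlocks (1 : Matrix m m α) 0 (-(M * L)) M * fromBlocks 1 0 L M⁻¹ = 1 := by
  rw [fromBlocks_one_zero_mul_fromBlocks_one_zero, neg_add_cancel,
    mul_nonsing_inv M ((isUnit_iff_isUnit_det M).mp hM), fromBlocks_one]

theorem semiconjBy_fromBlocks {M : Matrix n n α} (hM : IsUnit M)
    (L : Matrix n m α) (C : Matrix m n α) (V : Matrix n m α) (G : Matrix n n α) :
    SemiconjBy (fromBlocks 1 0 (-(M * L)) M)
      (fromBlocks 0 C (M⁻¹ * (V - G * M * L)) (L * C + M⁻¹ * G * M))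
      (fromBlocks (C * L) (C * M⁻¹) V G) := by
  have hdet := (isUnit_iff_isUnit_det M).mp hM
  have h₁ : M * M⁻¹ = 1 := mul_nonsing_inv M hdet
  have h₂ : M⁻¹ * M = 1 := nonsing_inv_mul M hdet
  simp only [SemiconjBy, fromBlocks_multiply]
  congr 1
  · simp [← Matrix.mul_assoc, Matrix.mul_assoc C, h₂]
  · simp [Matrix.mul_assoc, h₂]
  · simp [← Matrix.mul_assoc, h₁, sub_eq_add_neg]
  · simp [Matrix.mul_add, ← Matrix.mul_assoc, h₁]

end BlockSimilarity

/-- The fully second order principal part matrix `𝔄^p` is similar to the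
first order in time, second order in space principal part matrix `A^p` via the fixed
invertible block matrix `𝒯 = [[1,0],[-MF, M]]`, independent of `p`. -/
theorem stmt0 {n ι : Type*} [Fintype n] [DecidableEq n] [Fintype ι] [DecidableEq ι]
    (M : Matrix n n ℂ) (hM : IsUnit M)
    (F G : ι → Matrix n n ℂ) (V : ι → ι → Matrix n n ℂ)
    (𝒜 : ι → ι → Matrix n n ℂ) (ℬ : ι → Matrix n n ℂ)
    (h𝒜 : ∀ i j, 𝒜 i j = M⁻¹ * (V i j - G i * M * F j))
    (hℬ : ∀ i, ℬ i = F i + M⁻¹ * G i * M)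
    (A 𝔄 : ι → Matrix ((ι × n) ⊕ n) ((ι × n) ⊕ n) ℂ)
    (hA : ∀ p, A p = Matrix.of fun r c =>
      match r, c with
      | Sum.inl (i, a), Sum.inl (j, b) => if i = p then F j a b else 0
      | Sum.inl (i, a), Sum.inr b => if i = p then M⁻¹ a b else 0
      | Sum.inr a, Sum.inl (j, b) => V p j a b
      | Sum.inr a, Sum.inr b => G p a b)
    (h𝔄 : ∀ p, 𝔄 p = Matrix.of fun r c =>
      match r, c with
      | Sum.inl _, Sum.inl _ => 0
      | Sum.inl (i, a), Sum.inr b => if i = p then (1 : Matrix n n ℂ) a b else 0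
      | Sum.inr a, Sum.inl (j, b) => 𝒜 p j a b
      | Sum.inr a, Sum.inr b => ℬ p a b)
    (T Tinv : Matrix ((ι × n) ⊕ n) ((ι × n) ⊕ n) ℂ)
    (hT : T = Matrix.of fun r c =>
      match r, c with
      | Sum.inl (i, a), Sum.inl (j, b) => if i = j then (1 : Matrix n n ℂ) a b else 0
      | Sum.inl _, Sum.inr _ => 0
      | Sum.inr a, Sum.inl (j, b) => (-(M * F j)) a b
      | Sum.inr a, Sum.inr b => M a b)
    (hTinv : Tinv = Matrix.of fun r c =>
      match r, c with
      | Sum.inl (i, a), Sum.inl (j, b) => if i = j then (1 : Matrix n n ℂ) a b else 0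
      | Sum.inl _, Sum.inr _ => 0
      | Sum.inr a, Sum.inl (j, b) => F j a b
      | Sum.inr a, Sum.inr b => M⁻¹ a b) :
    Tinv * T = 1 ∧ T * Tinv = 1 ∧ ∀ p, 𝔄 p = Tinv * A p * T := by
  set L := blockRow F
  set C : ι → Matrix (ι × n) n ℂ := fun p => blockColSingle p 1
  have hT' : T = fromBlocks 1 0 (-(M * L)) M := by
    subst hT; ext (⟨i, a⟩ | a) (⟨j, b⟩ | b) <;>
      simp [L, blockRow, one_apply, Prod.ext_iff, ite_and, mul_apply]
  have hTinv' : Tinv = fromBlocks 1 0 L M⁻¹ := by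
    subst hTinv; ext (⟨i, a⟩ | a) (⟨j, b⟩ | b) <;>
      simp [L, blockRow, one_apply, Prod.ext_iff, ite_and]
  have hA' : ∀ p, A p = fromBlocks (C p * L) (C p * M⁻¹) (blockRow (V p)) (G p) := by
    intro p; rw [hA]
    ext (⟨i, a⟩ | a) (⟨j, b⟩ | b) <;>
      simp [C, L, blockRow, blockColSingle, mul_apply, ite_mul, one_apply]
  have h𝔄' : ∀ p, 𝔄 p = fromBlocks 0 (C p)
      (M⁻¹ * (blockRow (V p) - G p * M * L)) (L * C p + M⁻¹ * G p * M) := by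
    intro p
    rw [h𝔄, hℬ, blockRow_mul_blockColSingle, Matrix.mul_one, mul_blockRow, blockRow_sub,
      mul_blockRow, funext (h𝒜 p)]
    ext (⟨i, a⟩ | a) (⟨j, b⟩ | b) <;> simp [C, blockRow, blockColSingle]
  have hTinvT : Tinv * T = 1 := hTinv' ▸ hT' ▸ fromBlocks_inv_mul_fromBlocks hM L
  refine ⟨hTinvT, hT' ▸ hTinv' ▸ fromBlocks_mul_fromBlocks_inv hM L, fun p => ?_⟩
  have hconj : T * 𝔄 p = A p * T := hT' ▸ h𝔄' p ▸ hA' p ▸ semiconjBy_fromBlocks hM L (C p) _ _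
  rw [Matrix.mul_assoc, ← hconj, ← Matrix.mul_assoc, hTinvT, Matrix.one_mul]
end

section
/- Let B_n be a sequence of m×n real matrices converging to B, and suppose K(B_n) := inf over nonzero v in (ker B_n)^⊥ of ‖B_n v‖/‖v‖ converges to 0. Then there exists a unit vector h̄ in (the limit of a convergent subsequence of minimizing unit vectors) with B h̄ = 0 and h̄ is a limit of vectors orthogonal to ker B_n; consequently dim ker B > liminf dim ker B_n, i.e. rank B < liminf rank B_n. -/
/-!
Choose unit vectors `u_k ⊥ ker B_k` with `‖B_k u_k‖ < K(B_k) + 1/(k+1) → 0` and pass to a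
subsequence along which `rank B_k` equals its liminf `r`. Adjoining `u_k` to an orthonormal basis of
`ker B_k` gives orthonormal `(n - r + 1)`-frames that `B_k` almost annihilates. Orthonormal frames
form a compact set, so a further subsequence converges to an orthonormal frame lying in `ker B`;
its first vector is `h̄`, and `dim ker B ≥ n - r + 1`.
-/

open Filter Topology Module

theorem exists_strictMono_forall_eq_liminf (u : ℕ → ℕ) (hu : BddAbove (Set.range u)) :
    ∃ ψ : ℕ → ℕ, StrictMono ψ ∧ ∀ k, u (ψ k) = liminf u atTop := by
  obtain ⟨x, hux, hx⟩ :=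
    exists_seq_tendsto_liminf (f := atTop) (u := u) hu.isBoundedUnder_of_range.isCoboundedUnder_flip
  rw [nhds_discrete, tendsto_pure] at hux
  exact extraction_of_frequently_atTop (hx.frequently (p := (u · = _)) hux.frequently)

theorem exists_norm_eq_one_norm_apply_lt_iInf_add {𝕜 E F : Type*} [RCLike 𝕜]
    [NormedAddCommGroup E] [NormedSpace 𝕜 E] [NormedAddCommGroup F] [NormedSpace 𝕜 F]
    (A : E →L[𝕜] F) {S : Submodule 𝕜 E} (hS : S ≠ ⊥) {ε : ℝ} (hε : 0 < ε) :
    ∃ u ∈ S, ‖u‖ = 1 ∧ ‖A u‖ < (⨅ v : {v : E // v ∈ S ∧ v ≠ 0}, ‖A v.1‖ / ‖v.1‖) + ε := by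
  obtain ⟨w, hwS, hw0⟩ := (Submodule.ne_bot_iff _).mp hS
  have : Nonempty {v : E // v ∈ S ∧ v ≠ 0} := ⟨⟨w, hwS, hw0⟩⟩
  obtain ⟨⟨z, hzS, hz0⟩, hz⟩ := exists_lt_of_ciInf_lt (lt_add_of_pos_right
    (⨅ v : {v : E // v ∈ S ∧ v ≠ 0}, ‖A v.1‖ / ‖v.1‖) hε)
  have hz_norm : ‖z‖ ≠ 0 := norm_ne_zero_iff.mpr hz0
  refine ⟨(‖z‖⁻¹ : 𝕜) • z, S.smul_mem _ hzS, ?_, ?_⟩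
  · rw [norm_smul, norm_inv, RCLike.norm_ofReal, abs_norm, inv_mul_cancel₀ hz_norm]
  · rwa [map_smul, norm_smul, norm_inv, RCLike.norm_ofReal, abs_norm, inv_mul_eq_div]

section

variable {𝕜 E F ι : Type*} [RCLike 𝕜] [NormedAddCommGroup E] [InnerProductSpace 𝕜 E]
  [NormedAddCommGroup F] [NormedSpace 𝕜 F]

theorem isClosed_setOf_orthonormal : IsClosed {v : ι → E | Orthonormal 𝕜 v} := by
  classical
  simp only [orthonormal_iff_ite, Set.ofPred_forall]
  exact isClosed_iInter fun i => isClosed_iInter fun j =>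
    isClosed_eq ((continuous_apply i).inner (continuous_apply j)) continuous_const

theorem isCompact_setOf_orthonormal [ProperSpace E] : IsCompact {v : ι → E | Orthonormal 𝕜 v} :=
  (isCompact_univ_pi fun _ => isCompact_sphere (0 : E) 1).of_isClosed_subset
    isClosed_setOf_orthonormal fun v hv i _ => by simpa using hv.norm_eq_one i

theorem exists_orthonormal_extend_of_mem_orthogonal_ker [FiniteDimensional 𝕜 E] (A : E →L[𝕜] F)
    {u : E} (hu : u ∈ (LinearMap.ker (A : E →ₗ[𝕜] F))ᗮ) (hu_norm : ‖u‖ = 1) {d : ℕ}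
    (hd : finrank 𝕜 (LinearMap.ker (A : E →ₗ[𝕜] F)) = d) :
    ∃ g : Fin (d + 1) → E, Orthonormal 𝕜 g ∧ g 0 = u ∧ ∀ i, ‖A (g i)‖ ≤ ‖A u‖ := by
  set b := (stdOrthonormalBasis 𝕜 (LinearMap.ker (A : E →ₗ[𝕜] F))).reindex (finCongr hd)
  refine ⟨Matrix.vecCons u fun i => b i, ?_, rfl, Fin.cases le_rfl fun i => ?_⟩
  · exact orthonormal_vecCons_iff.2 ⟨hu_norm,
      fun i => Submodule.inner_left_of_mem_orthogonal (b i).2 hu,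
      b.orthonormal.comp_linearIsometry (Submodule.subtypeₗᵢ _)⟩
  · simp

theorem exists_subseq_tendsto_orthonormal_of_tendsto_apply [ProperSpace E] [Finite ι]
    {As : ℕ → E →L[𝕜] F} {A : E →L[𝕜] F} (hA : Tendsto As atTop (𝓝 A)) {g : ℕ → ι → E}
    (hg : ∀ k, Orthonormal 𝕜 (g k)) (hAg : ∀ i, Tendsto (fun k => As k (g k i)) atTop (𝓝 0)) :
    ∃ G : ι → E, Orthonormal 𝕜 G ∧ (∀ i, A (G i) = 0) ∧
      ∃ φ : ℕ → ℕ, StrictMono φ ∧ Tendsto (g ∘ φ) atTop (𝓝 G) := by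
  obtain ⟨G, hG, φ, hφ, hgG⟩ := isCompact_setOf_orthonormal.tendsto_subseq hg
  refine ⟨G, hG, fun i => ?_, φ, hφ, hgG⟩
  have hlim : Tendsto (fun k => As (φ k) (g (φ k) i)) atTop (𝓝 (A (G i))) :=
    ((continuous_fst.clm_apply continuous_snd).tendsto (A, G i)).comp
      ((hA.comp hφ.tendsto_atTop).prodMk_nhds ((continuous_apply i).tendsto G |>.comp hgG))
  exact tendsto_nhds_unique hlim ((hAg i).comp hφ.tendsto_atTop)

end

/-- If a sequence of matrices (as linear maps) `B_k → B` with
`K(B_k) = inf_{0 ≠ v ∈ (ker B_k)ᗮ} ‖B_k v‖/‖v‖ → 0`, then there is a unit vector `h̄`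
in the kernel of `B` which is a limit of unit vectors orthogonal to the kernels of a
subsequence of the `B_k`; consequently `rank B < liminf rank B_k`. -/
theorem stmt5 {m n : ℕ}
    (Bseq : ℕ → (EuclideanSpace ℝ (Fin n) →L[ℝ] EuclideanSpace ℝ (Fin m)))
    (B : EuclideanSpace ℝ (Fin n) →L[ℝ] EuclideanSpace ℝ (Fin m))
    (hconv : Tendsto Bseq atTop (nhds B))
    (K : ℕ → ℝ)
    (hK : ∀ k, K k = ⨅ v : {v : EuclideanSpace ℝ (Fin n) //
        v ∈ (LinearMap.ker (Bseq k : EuclideanSpace ℝ (Fin n) →ₗ[ℝ] EuclideanSpace ℝ (Fin m)))ᗮ ∧ v ≠ 0}, ‖Bseq k v.1‖ / ‖v.1‖)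
    (hKto0 : Tendsto K atTop (nhds 0))
    (hne : ∀ k, (LinearMap.ker (Bseq k : EuclideanSpace ℝ (Fin n) →ₗ[ℝ] EuclideanSpace ℝ (Fin m)))ᗮ ≠ ⊥) :
    (∃ hbar : EuclideanSpace ℝ (Fin n), ‖hbar‖ = 1 ∧ B hbar = 0 ∧
      ∃ φ : ℕ → ℕ, StrictMono φ ∧
        ∃ v : ℕ → EuclideanSpace ℝ (Fin n),
          (∀ k, v k ∈ (LinearMap.ker (Bseq (φ k) : EuclideanSpace ℝ (Fin n) →ₗ[ℝ] EuclideanSpace ℝ (Fin m)))ᗮ ∧ ‖v k‖ = 1) ∧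
          Tendsto v atTop (nhds hbar)) ∧
    Module.finrank ℝ (LinearMap.range (B : EuclideanSpace ℝ (Fin n) →ₗ[ℝ] EuclideanSpace ℝ (Fin m))) <
      liminf (fun k => Module.finrank ℝ (LinearMap.range (Bseq k : EuclideanSpace ℝ (Fin n) →ₗ[ℝ] EuclideanSpace ℝ (Fin m)))) atTop := by
  have rank_add_nullity (A : EuclideanSpace ℝ (Fin n) →L[ℝ] EuclideanSpace ℝ (Fin m)) :
      finrank ℝ (LinearMap.range A.toLinearMap) + finrank ℝ (LinearMap.ker A.toLinearMap) = n := by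
    simpa using LinearMap.finrank_range_add_finrank_ker A.toLinearMap
  choose u hu_mem hu_norm hu_lt using fun k => hK k ▸
    exists_norm_eq_one_norm_apply_lt_iInf_add (Bseq k) (hne k) (Nat.one_div_pos_of_nat (n := k))
  have hBu : Tendsto (fun k => Bseq k (u k)) atTop (𝓝 0) :=
    squeeze_zero_norm (fun k => (hu_lt k).le)
      (by simpa using hKto0.add tendsto_one_div_add_atTop_nhds_zero_nat)
  obtain ⟨ψ, hψ, hψ_rank⟩ := exists_strictMono_forall_eq_liminf
    (fun k => finrank ℝ (LinearMap.range (Bseq k).toLinearMap))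
    ⟨n, Set.forall_mem_range.2 fun k => by have := rank_add_nullity (Bseq k); omega⟩
  set d := finrank ℝ (LinearMap.ker (Bseq (ψ 0)).toLinearMap)
  have hd (k : ℕ) : finrank ℝ (LinearMap.ker (Bseq (ψ k)).toLinearMap) = d := by
    have := rank_add_nullity (Bseq (ψ k)); have := rank_add_nullity (Bseq (ψ 0))
    have := hψ_rank k; have := hψ_rank 0; omega
  choose g hg hg_zero hg_le using fun k =>
    exists_orthonormal_extend_of_mem_orthogonal_ker _ (hu_mem (ψ k)) (hu_norm (ψ k)) (hd k)
  obtain ⟨G, hG, hG_ker, φ, hφ, hgG⟩ := exists_subseq_tendsto_orthonormal_of_tendsto_apply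
    (hconv.comp hψ.tendsto_atTop) hg fun i => squeeze_zero_norm (fun k => hg_le k i)
      (tendsto_zero_iff_norm_tendsto_zero.1 (hBu.comp hψ.tendsto_atTop))
  have hker : d + 1 ≤ finrank ℝ (LinearMap.ker B.toLinearMap) := by
    simpa using (finrank_span_eq_card hG.linearIndependent).symm.trans_le
      (Submodule.finrank_mono (Submodule.span_le.2 (Set.range_subset_iff.2 hG_ker)))
  refine ⟨⟨G 0, hG.norm_eq_one 0, hG_ker 0, ψ ∘ φ, hψ.comp hφ, fun k => u (ψ (φ k)),
    fun k => ⟨hu_mem _, hu_norm _⟩, ?_⟩, ?_⟩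
  · simpa [Function.comp_def, hg_zero] using ((continuous_apply 0).tendsto G).comp hgG
  · have := rank_add_nullity B; have := rank_add_nullity (Bseq (ψ 0)); have := hψ_rank 0; omega
end

section
/- The real 4×4 matrix with block structure [[0, 0, 1, 0],[0, 0, 0, 1],[λ², b, 0, 0],[0, λ², 0, 0]] (blocks [[0, I₂],[J, 0]] with J = [[λ², b],[0, λ²]]) is diagonalizable over ℝ with real eigenvalues if and only if b = 0 and λ² > 0. -/
open Matrix


private lemma det4 {R : Type*} [CommRing R] (A : Matrix (Fin 4) (Fin 4) R) :
    A.det =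
      A 0 0 * A 1 1 * A 2 2 * A 3 3 - A 0 0 * A 1 1 * A 2 3 * A 3 2 -
        A 0 0 * A 1 2 * A 2 1 * A 3 3 + A 0 0 * A 1 2 * A 2 3 * A 3 1 +
        A 0 0 * A 1 3 * A 2 1 * A 3 2 - A 0 0 * A 1 3 * A 2 2 * A 3 1 -
        A 0 1 * A 1 0 * A 2 2 * A 3 3 + A 0 1 * A 1 0 * A 2 3 * A 3 2 +
        A 0 1 * A 1 2 * A 2 0 * A 3 3 - A 0 1 * A 1 2 * A 2 3 * A 3 0 -
        A 0 1 * A 1 3 * A 2 0 * A 3 2 + A 0 1 * A 1 3 * A 2 2 * A 3 0 +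
        A 0 2 * A 1 0 * A 2 1 * A 3 3 - A 0 2 * A 1 0 * A 2 3 * A 3 1 -
        A 0 2 * A 1 1 * A 2 0 * A 3 3 + A 0 2 * A 1 1 * A 2 3 * A 3 0 +
        A 0 2 * A 1 3 * A 2 0 * A 3 1 - A 0 2 * A 1 3 * A 2 1 * A 3 0 -
        A 0 3 * A 1 0 * A 2 1 * A 3 2 + A 0 3 * A 1 0 * A 2 2 * A 3 1 +
        A 0 3 * A 1 1 * A 2 0 * A 3 2 - A 0 3 * A 1 1 * A 2 2 * A 3 0 -
        A 0 3 * A 1 2 * A 2 0 * A 3 1 + A 0 3 * A 1 2 * A 2 1 * A 3 0 := by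
  rw [Matrix.det_succ_row_zero]
  simp [Fin.sum_univ_succ, Matrix.det_fin_three, Matrix.submatrix_apply, Fin.succAbove,
    show ((2:Fin 3).succ : Fin 4) = 3 from rfl,
    show (Fin.castSucc (2:Fin 3) : Fin 4) = 2 from rfl]
  ring

set_option maxHeartbeats 1000000 in
/-- The real 4×4 matrix `[[0,I₂],[J,0]]` with `J = [[λ², b],[0, λ²]]`
(the vector block of the principal symbol) is diagonalizable over ℝ (hence with real
eigenvalues) if and only if `b = 0` and `λ² > 0`. -/
theorem stmt8 (L b : ℝ) :
    (∃ P D : Matrix (Fin 4) (Fin 4) ℝ, IsUnit P ∧ D.IsDiag ∧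
      !![0, 0, 1, 0;
         0, 0, 0, 1;
         L, b, 0, 0;
         0, L, 0, 0] = P * D * P⁻¹) ↔ (b = 0 ∧ 0 < L) := by
  constructor
  · rintro ⟨P, D, hP, hD, hM⟩
    have hd : ∀ i j : Fin 4, i ≠ j → D i j = 0 := fun i j h => hD h
    have hPdet : IsUnit P.det := (Matrix.isUnit_iff_isUnit_det P).mp hP
    have hPne : P.det ≠ 0 := hPdet.ne_zero
    have hPP : P * P⁻¹ = 1 := Matrix.mul_nonsing_inv P hPdet
    have hPPi : P⁻¹ * P = 1 := Matrix.nonsing_inv_mul P hPdet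
    have hchar : ∀ x : ℝ, (x ^ 2 - L) ^ 2 =
        (D 0 0 - x) * ((D 1 1 - x) * ((D 2 2 - x) * (D 3 3 - x))) := by
      intro x
      have h1 : (!![0, 0, 1, 0; 0, 0, 0, 1; L, b, 0, 0; 0, L, 0, 0]
            - x • (1 : Matrix (Fin 4) (Fin 4) ℝ)) = P * (D - x • 1) * P⁻¹ := by
        have hx : P * (x • (1 : Matrix (Fin 4) (Fin 4) ℝ)) * P⁻¹
            = x • (1 : Matrix (Fin 4) (Fin 4) ℝ) := by
          rw [Matrix.mul_smul, Matrix.mul_one, Matrix.smul_mul, hPP]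
        rw [Matrix.mul_sub, Matrix.sub_mul, hx, hM]
      have h2 := congrArg Matrix.det h1
      rw [Matrix.det_mul, Matrix.det_mul, Matrix.det_nonsing_inv] at h2
      have h3 : (!![0, 0, 1, 0; 0, 0, 0, 1; L, b, 0, 0; 0, L, 0, 0]
          - x • (1 : Matrix (Fin 4) (Fin 4) ℝ)).det = (D - x • 1).det := by
        rw [h2, Ring.inverse_eq_inv']
        field_simp
      rw [det4, det4] at h3
      simp only [Matrix.sub_apply, Matrix.smul_apply, Matrix.one_apply, smul_eq_mul,
        hd 0 1 (by decide), hd 0 2 (by decide), hd 0 3 (by decide),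
        hd 1 0 (by decide), hd 1 2 (by decide), hd 1 3 (by decide),
        hd 2 0 (by decide), hd 2 1 (by decide), hd 2 3 (by decide),
        hd 3 0 (by decide), hd 3 1 (by decide), hd 3 2 (by decide)] at h3
      simp (config := { decide := true }) [Matrix.vecHead, Matrix.vecTail] at h3
      linear_combination h3
    have e0 : D 0 0 ^ 2 = L := by
      have h := hchar (D 0 0); nlinarith [h]
    have e1 : D 1 1 ^ 2 = L := by
      have h := hchar (D 1 1); nlinarith [h]
    have e2 : D 2 2 ^ 2 = L := by
      have h := hchar (D 2 2); nlinarith [h]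
    have e3 : D 3 3 ^ 2 = L := by
      have h := hchar (D 3 3); nlinarith [h]
    have hL0 : 0 ≤ L := e0 ▸ sq_nonneg _
    have hLne : L ≠ 0 := by
      intro h0
      have z0 : D 0 0 = 0 := (pow_eq_zero_iff two_ne_zero).mp (by rw [e0, h0])
      have z1 : D 1 1 = 0 := (pow_eq_zero_iff two_ne_zero).mp (by rw [e1, h0])
      have z2 : D 2 2 = 0 := (pow_eq_zero_iff two_ne_zero).mp (by rw [e2, h0])
      have z3 : D 3 3 = 0 := (pow_eq_zero_iff two_ne_zero).mp (by rw [e3, h0])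
      have hz : ∀ i : Fin 4, D i i = 0 := by
        intro i
        fin_cases i
        · exact z0
        · exact z1
        · exact z2
        · exact z3
      have hD0 : D = 0 := by
        ext i j
        rcases eq_or_ne i j with rfl | hij
        · simpa using hz i
        · simpa using hd i j hij
      rw [hD0, Matrix.mul_zero, Matrix.zero_mul] at hM
      have := congrFun (congrFun hM 0) 2
      simp at this
    have hL : 0 < L := lt_of_le_of_ne hL0 (Ne.symm hLne)
    have e0' : D 0 0 * D 0 0 = L := by rw [← pow_two]; exact e0
    have e1' : D 1 1 * D 1 1 = L := by rw [← pow_two]; exact e1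
    have e2' : D 2 2 * D 2 2 = L := by rw [← pow_two]; exact e2
    have e3' : D 3 3 * D 3 3 = L := by rw [← pow_two]; exact e3
    have hDD : D * D = L • (1 : Matrix (Fin 4) (Fin 4) ℝ) := by
      ext i j
      rw [Matrix.mul_apply, Fin.sum_univ_four]
      fin_cases i <;> fin_cases j <;>
        simp [hd 0 1 (by decide), hd 0 2 (by decide), hd 0 3 (by decide),
          hd 1 0 (by decide), hd 1 2 (by decide), hd 1 3 (by decide),
          hd 2 0 (by decide), hd 2 1 (by decide), hd 2 3 (by decide),
          hd 3 0 (by decide), hd 3 1 (by decide), hd 3 2 (by decide),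
          Matrix.one_apply, e0', e1', e2', e3']
    have hMM : (!![0, 0, 1, 0; 0, 0, 0, 1; L, b, 0, 0; 0, L, 0, 0] *
        !![0, 0, 1, 0; 0, 0, 0, 1; L, b, 0, 0; 0, L, 0, 0])
        = L • (1 : Matrix (Fin 4) (Fin 4) ℝ) := by
      rw [hM]
      calc (P * D * P⁻¹) * (P * D * P⁻¹)
          = P * D * (P⁻¹ * P) * D * P⁻¹ := by simp only [Matrix.mul_assoc]
        _ = P * (D * D) * P⁻¹ := by rw [hPPi]; simp only [Matrix.mul_assoc, Matrix.mul_one]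
        _ = P * (L • (1 : Matrix (Fin 4) (Fin 4) ℝ)) * P⁻¹ := by rw [hDD]
        _ = L • (P * P⁻¹) := by rw [Matrix.mul_smul, Matrix.mul_one, Matrix.smul_mul]
        _ = L • 1 := by rw [hPP]
    have hb := congrFun (congrFun hMM 2) 3
    rw [Matrix.mul_apply, Fin.sum_univ_four] at hb
    simp [Matrix.one_apply] at hb
    exact ⟨hb, hL⟩
  · rintro ⟨rfl, hL⟩
    set s := Real.sqrt L with hs
    have hs2 : s ^ 2 = L := Real.sq_sqrt hL.le
    have hspos : 0 < s := Real.sqrt_pos.mpr hL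
    refine ⟨!![1, 0, 1, 0; 0, 1, 0, 1; s, 0, -s, 0; 0, s, 0, -s],
      !![s, 0, 0, 0; 0, s, 0, 0; 0, 0, -s, 0; 0, 0, 0, -s], ?_, ?_, ?_⟩
    · rw [Matrix.isUnit_iff_isUnit_det, isUnit_iff_ne_zero]
      have hdet : (!![1, 0, 1, 0; 0, 1, 0, 1; s, 0, -s, 0; 0, s, 0, -s] :
          Matrix (Fin 4) (Fin 4) ℝ).det = 4 * s ^ 2 := by
        rw [det4]; simp; ring
      rw [hdet]
      nlinarith [hspos]
    · intro i j hij
      fin_cases i <;> fin_cases j <;> simp_all [Matrix.vecHead, Matrix.vecTail]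
    · have hdet : IsUnit (!![1, 0, 1, 0; 0, 1, 0, 1; s, 0, -s, 0; 0, s, 0, -s] :
          Matrix (Fin 4) (Fin 4) ℝ).det := by
        rw [isUnit_iff_ne_zero]
        have h4 : (!![1, 0, 1, 0; 0, 1, 0, 1; s, 0, -s, 0; 0, s, 0, -s] :
            Matrix (Fin 4) (Fin 4) ℝ).det = 4 * s ^ 2 := by
          rw [det4]; simp; ring
        rw [h4]; nlinarith [hspos]
      have hPP : (!![1, 0, 1, 0; 0, 1, 0, 1; s, 0, -s, 0; 0, s, 0, -s] :
          Matrix (Fin 4) (Fin 4) ℝ) * (!![1, 0, 1, 0; 0, 1, 0, 1; s, 0, -s, 0; 0, s, 0, -s])⁻¹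
          = 1 := Matrix.mul_nonsing_inv _ hdet
      have hMP : !![0, 0, 1, 0; 0, 0, 0, 1; L, 0, 0, 0; 0, L, 0, 0] *
          !![1, 0, 1, 0; 0, 1, 0, 1; s, 0, -s, 0; 0, s, 0, -s]
          = !![1, 0, 1, 0; 0, 1, 0, 1; s, 0, -s, 0; 0, s, 0, -s] *
          !![s, 0, 0, 0; 0, s, 0, 0; 0, 0, -s, 0; 0, 0, 0, -s] := by
        rw [← hs2]
        ext i j
        rw [Matrix.mul_apply, Matrix.mul_apply, Fin.sum_univ_four, Fin.sum_univ_four]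
        fin_cases i <;> fin_cases j <;>
          simp [Matrix.vecHead, Matrix.vecTail] <;> ring
      rw [← hMP, Matrix.mul_assoc, hPP, Matrix.mul_one]
end

section
/- For real parameters G > 0, λ² > 0 and p₄ satisfying 0 < p₄ < min(3G/2, 5Gλ²/6), all of the quantities 4(3G²λ² + 3G(λ²−1)p₄ − 4p₄²)/((1+3λ²)G), 3G − 2p₄, 4p₄, 6p₄ − 4p₄²/G, and 10p₄ − 12p₄²/(λ²G) are strictly positive. -/
/-- For `G > 0`, `λ² > 0` and `0 < p₄ < min(3G/2, 5Gλ²/6)`, all of the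
eigenvalues `4(3G²λ² + 3G(λ²−1)p₄ − 4p₄²)/((1+3λ²)G)`, `3G − 2p₄`, `4p₄`,
`6p₄ − 4p₄²/G`, `10p₄ − 12p₄²/(λ²G)` are strictly positive. -/
theorem stmt18 (G l2 p4 : ℝ) (hG : 0 < G) (hl : 0 < l2)
    (hp0 : 0 < p4) (hp : p4 < min (3*G/2) (5*G*l2/6)) :
    0 < 4*(3*G^2*l2 + 3*G*(l2 - 1)*p4 - 4*p4^2)/((1 + 3*l2)*G) ∧
    0 < 3*G - 2*p4 ∧ 0 < 4*p4 ∧ 0 < 6*p4 - 4*p4^2/G ∧ 0 < 10*p4 - 12*p4^2/(l2*G) := by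
  obtain ⟨h1, h2⟩ := lt_min_iff.mp hp
  have hden : 0 < (1 + 3*l2)*G := by positivity
  have hkey : 0 < 3*G^2*l2 + 3*G*(l2 - 1)*p4 - 4*p4^2 := by
    nlinarith [mul_pos (sub_pos.mpr h2) (add_pos hG hp0),
      mul_pos (sub_pos.mpr h1) hp0, mul_pos hG hp0]
  refine ⟨by positivity, by linarith, by linarith, ?_, ?_⟩
  · have : 4*p4^2/G < 6*p4 := by
      rw [div_lt_iff₀ hG]; nlinarith
    linarith
  · have : 12*p4^2/(l2*G) < 10*p4 := by
      rw [div_lt_iff₀ (by positivity)]; nlinarith [mul_pos hp0 (sub_pos.mpr h2)]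
    linarith
end

section
/- Block decoupling of symmetrizers: suppose a first order in time, second order in space system has principal part matrix A^p of the block form [[0, A₁₂, A₁₃, 0],[A₂₁, 0, 0, A₂₄],[A₃₁, 0, 0, A₃₄],[0, A₄₂, A₄₃, 0]] (pairs coupled only through off-diagonal blocks as indicated). If H̃ is a Hermitian positive definite symmetrizer of A^p, then the matrix H obtained from H̃ by keeping only the blocks H₁₁, H₁₄, H₂₂, H₂₃, H₃₃, H₄₄ (and their conjugates) and setting the other blocks to zero is also a Hermitian positive definite symmetrizer of A^p. -/
open Matrix
open scoped ComplexOrder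

/-! The sign matrix `D = diag(1, -1, -1, 1)` is a Hermitian involution anticommuting with every
`A^p`, so `D H̃ D` is again a symmetrizer: it is a congruence of `H̃`, and
`D H̃ D A^p = -D (H̃ A^p) D`. Symmetrizers form a convex cone, and `H = (H̃ + D H̃ D) / 2`. -/

namespace Matrix

variable {ι n : Type*} [Fintype ι] [Fintype n]

def IsSymmetrizer (H : Matrix n n ℂ) (A : ι → Matrix n n ℂ) : Prop :=
  H.PosDef ∧ ∀ s : ι → ℝ, (∑ p, ((s p : ℝ) : ℂ) • (H * A p)).IsHermitian

namespace IsSymmetrizer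

variable {H K : Matrix n n ℂ} {A : ι → Matrix n n ℂ}

theorem add (hH : IsSymmetrizer H A) (hK : IsSymmetrizer K A) : IsSymmetrizer (H + K) A := by
  refine ⟨hH.1.add hK.1, fun s => ?_⟩
  simp only [Matrix.add_mul, smul_add, Finset.sum_add_distrib]
  exact (hH.2 s).add (hK.2 s)

theorem smul (hH : IsSymmetrizer H A) {r : ℝ} (hr : 0 < r) : IsSymmetrizer (r • H) A := by
  refine ⟨hH.1.smul hr, fun s => ?_⟩
  simp only [Matrix.smul_mul, smul_comm _ r, ← Finset.smul_sum]
  exact (hH.2 s).smul (IsSelfAdjoint.all r)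

theorem conj_of_anticomm [DecidableEq n] (hH : IsSymmetrizer H A) {D : Matrix n n ℂ}
    (hD : Dᴴ = D) (hDD : D * D = 1) (hDA : ∀ p, D * A p = -(A p * D)) :
    IsSymmetrizer (D * H * D) A := by
  have hinj : Function.Injective D.mulVec :=
    Function.LeftInverse.injective (g := D.mulVec) fun x => by rw [mulVec_mulVec, hDD, one_mulVec]
  refine ⟨?_, fun s => ?_⟩
  · simpa only [hD] using hH.1.conjTranspose_mul_mul_same hinj
  have hsum : ∑ p, ((s p : ℝ) : ℂ) • (D * H * D * A p)
      = -(D * (∑ p, ((s p : ℝ) : ℂ) • (H * A p)) * D) := by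
    simp only [Finset.mul_sum, Finset.sum_mul, ← Finset.sum_neg_distrib, Matrix.mul_smul,
      Matrix.smul_mul, ← smul_neg]
    refine Finset.sum_congr rfl fun p _ => ?_
    rw [Matrix.mul_assoc _ D, hDA, Matrix.mul_neg, ← Matrix.mul_assoc, Matrix.mul_assoc D]
  rw [hsum]
  simpa only [hD] using (isHermitian_conjTranspose_mul_mul D (hH.2 s)).neg

end IsSymmetrizer

section BlockSign

variable {α n1 n2 n3 n4 : Type*} [Fintype n1] [DecidableEq n1] [Fintype n2] [DecidableEq n2]
  [Fintype n3] [DecidableEq n3] [Fintype n4] [DecidableEq n4]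

def blockSign [Ring α] : Matrix ((n1 ⊕ n2) ⊕ (n3 ⊕ n4)) ((n1 ⊕ n2) ⊕ (n3 ⊕ n4)) α :=
  fromBlocks (fromBlocks 1 0 0 (-1)) 0 0 (fromBlocks (-1) 0 0 1)

omit [Fintype n1] [Fintype n2] [Fintype n3] [Fintype n4] in
theorem blockSign_conjTranspose [Ring α] [StarRing α] :
    (blockSign : Matrix ((n1 ⊕ n2) ⊕ (n3 ⊕ n4)) _ α)ᴴ = blockSign := by
  simp [blockSign, fromBlocks_conjTranspose]

theorem blockSign_mul_self [Ring α] :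
    (blockSign : Matrix ((n1 ⊕ n2) ⊕ (n3 ⊕ n4)) _ α) * blockSign = 1 := by
  simp [blockSign, fromBlocks_multiply, fromBlocks_one]

theorem blockSign_anticomm [Ring α] (A12 : Matrix n1 n2 α) (A13 : Matrix n1 n3 α)
    (A21 : Matrix n2 n1 α) (A24 : Matrix n2 n4 α) (A31 : Matrix n3 n1 α) (A34 : Matrix n3 n4 α)
    (A42 : Matrix n4 n2 α) (A43 : Matrix n4 n3 α) :
    let A := fromBlocks (fromBlocks 0 A12 A21 0) (fromBlocks A13 0 0 A24)
      (fromBlocks A31 0 0 A42) (fromBlocks 0 A34 A43 0)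
    blockSign * A = -(A * blockSign) := by
  simp [blockSign, fromBlocks_multiply, fromBlocks_neg]

theorem inv_two_smul_add_blockSign_conj (H11 : Matrix n1 n1 ℂ) (H12 : Matrix n1 n2 ℂ)
    (H13 : Matrix n1 n3 ℂ) (H14 : Matrix n1 n4 ℂ) (H22 : Matrix n2 n2 ℂ) (H23 : Matrix n2 n3 ℂ)
    (H24 : Matrix n2 n4 ℂ) (H33 : Matrix n3 n3 ℂ) (H34 : Matrix n3 n4 ℂ) (H44 : Matrix n4 n4 ℂ) :
    let H := fromBlocks (fromBlocks H11 H12 H12ᴴ H22) (fromBlocks H13 H14 H23 H24)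
      (fromBlocks H13ᴴ H23ᴴ H14ᴴ H24ᴴ) (fromBlocks H33 H34 H34ᴴ H44)
    (2⁻¹ : ℝ) • (H + blockSign * H * blockSign) = fromBlocks (fromBlocks H11 0 0 H22)
      (fromBlocks 0 H14 H23 0) (fromBlocks 0 H23ᴴ H14ᴴ 0) (fromBlocks H33 0 0 H44) := by
  norm_num [blockSign, fromBlocks_multiply, fromBlocks_add, fromBlocks_smul, ← add_smul]

end BlockSign

end Matrix

/-- Block decoupling of symmetrizers.  If the principal part matrices
`A^p` have the block structure
`[[0, A₁₂, A₁₃, 0],[A₂₁, 0, 0, A₂₄],[A₃₁, 0, 0, A₃₄],[0, A₄₂, A₄₃, 0]]`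
and `H̃` (with blocks `H̃ₐᵦ`) is a Hermitian positive definite symmetrizer of the
family `A^p` (i.e. `H̃` is positive definite and every contraction
`Σ_p s_p H̃ A^p` is Hermitian), then the matrix `H` obtained from `H̃` by keeping
only the blocks `H₁₁, H₁₄, H₂₂, H₂₃, H₃₃, H₄₄` (and their conjugates) and setting the
remaining blocks to zero is also a Hermitian positive definite symmetrizer of `A^p`. -/
theorem stmt19 {ι n1 n2 n3 n4 : Type*} [Fintype ι]
    [Fintype n1] [DecidableEq n1] [Fintype n2] [DecidableEq n2]
    [Fintype n3] [DecidableEq n3] [Fintype n4] [DecidableEq n4]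
    (A12 : ι → Matrix n1 n2 ℂ) (A13 : ι → Matrix n1 n3 ℂ)
    (A21 : ι → Matrix n2 n1 ℂ) (A24 : ι → Matrix n2 n4 ℂ)
    (A31 : ι → Matrix n3 n1 ℂ) (A34 : ι → Matrix n3 n4 ℂ)
    (A42 : ι → Matrix n4 n2 ℂ) (A43 : ι → Matrix n4 n3 ℂ)
    (A : ι → Matrix ((n1 ⊕ n2) ⊕ (n3 ⊕ n4)) ((n1 ⊕ n2) ⊕ (n3 ⊕ n4)) ℂ)
    (hA : ∀ p, A p = Matrix.fromBlocks
      (Matrix.fromBlocks 0 (A12 p) (A21 p) 0)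
      (Matrix.fromBlocks (A13 p) 0 0 (A24 p))
      (Matrix.fromBlocks (A31 p) 0 0 (A42 p))
      (Matrix.fromBlocks 0 (A34 p) (A43 p) 0))
    (H11 : Matrix n1 n1 ℂ) (H12 : Matrix n1 n2 ℂ) (H13 : Matrix n1 n3 ℂ)
    (H14 : Matrix n1 n4 ℂ) (H22 : Matrix n2 n2 ℂ) (H23 : Matrix n2 n3 ℂ)
    (H24 : Matrix n2 n4 ℂ) (H33 : Matrix n3 n3 ℂ) (H34 : Matrix n3 n4 ℂ)
    (H44 : Matrix n4 n4 ℂ)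
    (Htilde : Matrix ((n1 ⊕ n2) ⊕ (n3 ⊕ n4)) ((n1 ⊕ n2) ⊕ (n3 ⊕ n4)) ℂ)
    (hHtilde : Htilde = Matrix.fromBlocks
      (Matrix.fromBlocks H11 H12 H12ᴴ H22)
      (Matrix.fromBlocks H13 H14 H23 H24)
      (Matrix.fromBlocks H13ᴴ H23ᴴ H14ᴴ H24ᴴ)
      (Matrix.fromBlocks H33 H34 H34ᴴ H44))
    (hpos : Htilde.PosDef)
    (hcand : ∀ s : ι → ℝ, (∑ p, ((s p : ℝ) : ℂ) • (Htilde * A p)).IsHermitian)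
    (H : Matrix ((n1 ⊕ n2) ⊕ (n3 ⊕ n4)) ((n1 ⊕ n2) ⊕ (n3 ⊕ n4)) ℂ)
    (hH : H = Matrix.fromBlocks
      (Matrix.fromBlocks H11 0 0 H22)
      (Matrix.fromBlocks 0 H14 H23 0)
      (Matrix.fromBlocks 0 H23ᴴ H14ᴴ 0)
      (Matrix.fromBlocks H33 0 0 H44)) :
    H.PosDef ∧ ∀ s : ι → ℝ, (∑ p, ((s p : ℝ) : ℂ) • (H * A p)).IsHermitian := by
  have hsign : ∀ p, blockSign * A p = -(A p * blockSign) := fun p => by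
    rw [hA p]
    exact blockSign_anticomm _ _ _ _ _ _ _ _
  have hHtilde_sym : IsSymmetrizer Htilde A := ⟨hpos, hcand⟩
  have havg := (hHtilde_sym.add (hHtilde_sym.conj_of_anticomm blockSign_conjTranspose
    blockSign_mul_self hsign)).smul (r := 2⁻¹) (by norm_num)
  rwa [hHtilde, inv_two_smul_add_blockSign_conj, ← hH] at havg
end
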